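/- ℚ[ReLU, x_i]_{i∈ℕ} and RPL(⊙) have the same expressive power with respect to scaling. That is: (1) for every n ≥ 1, every tuple (t_1, …, t_n) of terms of ℚ[ReLU, x_i]_{i∈ℕ} and every real i > 0, there exist a real k ≥ i and formulae φ_1, …, φ_n of RPL(⊙) such that φ_j is (i,k)-equivalent to t_j for every j ∈ {1, …, n}; and (2) for every tuple (φ_1, …, φ_n) of formulae of RPL(⊙) there is a tuple (t_1, …, t_n) of terms of ℚ[ReLU, x_i]_{i∈ℕ} such that t_j is equivalent to φ_j for every j ∈ {1, …, n}. -/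

import Mathlib

/-- Terms of ℚ[ReLU, x_i]_{i∈ℕ}; variables are indexed by ℕ. -/
inductive RTerm : Type where
  | const : ℚ → RTerm
  | var : ℕ → RTerm
  | add : RTerm → RTerm → RTerm
  | mul : RTerm → RTerm → RTerm
  | relu : RTerm → RTerm

/-- Value of a term under an evaluation map `E : ℕ → ℝ`. -/
def RTerm.eval (E : ℕ → ℝ) : RTerm → ℝ
  | .const r => (r : ℝ)
  | .var x => E x
  | .add t t' => t.eval E + t'.eval E
  | .mul t t' => t.eval E * t'.eval E
  | .relu t => max 0 (t.eval E)

/-- Degree of a term. -/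
def RTerm.deg : RTerm → ℕ
  | .const _ => 0
  | .var _ => 1
  | .add t t' => max t.deg t'.deg
  | .mul t t' => t.deg + t'.deg
  | .relu t => t.deg

/-- Subterms of a term. -/
def RTerm.subt : RTerm → List RTerm
  | .const r => [.const r]
  | .var x => [.var x]
  | .add t t' => t.subt ++ t'.subt ++ [.add t t']
  | .mul t t' => t.subt ++ t'.subt ++ [.mul t t']
  | .relu t => t.subt ++ [.relu t]

/-- Proto-neurons. -/
inductive RTerm.ProtoNeuron : RTerm → Prop where
  | const (r : ℚ) : RTerm.ProtoNeuron (.const r)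
  | var (x : ℕ) : RTerm.ProtoNeuron (.var x)
  | add {t t'} : RTerm.ProtoNeuron t → RTerm.ProtoNeuron t' → RTerm.ProtoNeuron (.add t t')
  | mul {t t'} : RTerm.ProtoNeuron t → RTerm.ProtoNeuron t' → t.deg + t'.deg ≤ 1 →
      RTerm.ProtoNeuron (.mul t t')
  | relu {t} : RTerm.ProtoNeuron t → RTerm.ProtoNeuron (.relu t)

/-- `ReLU (w₁·n₁ + (w₂·n₂ + (⋯ + b)))`. -/
def layerNeuron (ws : List (ℚ × RTerm)) (b : ℚ) : RTerm :=
  .relu (ws.foldr (fun wt acc => .add (.mul (.const wt.1) wt.2) acc) (.const b))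

/-- Rational-parameter ReLU-activated neural networks of a given depth,
identified with the tuples of their output neurons. -/
inductive IsNN : ℕ → List RTerm → Prop where
  | input (ys : List ℕ) : ys ≠ [] → ys.Nodup → IsNN 0 (ys.map RTerm.var)
  | layer {d : ℕ} {prev : List RTerm} (hprev : IsNN d prev)
      (params : List (List ℚ × ℚ)) (hne : params ≠ [])
      (hlen : ∀ p ∈ params, p.1.length = prev.length) :
      IsNN (d + 1) (params.map fun p => layerNeuron (p.1.zip prev) p.2)

/-- A neuron is a component of some neural network. -/
def IsNeuron (t : RTerm) : Prop := ∃ d N, IsNN d N ∧ t ∈ N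

/-- Formulae of RPL(⊙): truth constants r̄ for r ∈ ℚ ∩ [0,1], proposition
symbols, →_L and ⊙. -/
inductive RPLForm : Type where
  | const : {r : ℚ // 0 ≤ r ∧ r ≤ 1} → RPLForm
  | prop : ℕ → RPLForm
  | impL : RPLForm → RPLForm → RPLForm
  | conj : RPLForm → RPLForm → RPLForm

/-- A valuation assigns to every proposition symbol a value in [0,1]. -/
def IsValuation (V : ℕ → ℝ) : Prop := ∀ p, 0 ≤ V p ∧ V p ≤ 1

/-- Truth value of an RPL(⊙)-formula under a valuation. -/
def RPLForm.val (V : ℕ → ℝ) : RPLForm → ℝ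
  | .const r => (r.1 : ℝ)
  | .prop p => V p
  | .impL φ ψ => min 1 (1 - φ.val V + ψ.val V)
  | .conj φ ψ => φ.val V * ψ.val V

/-- Formulae with no proposition symbols. -/
def RPLForm.propFree : RPLForm → Prop
  | .const _ => True
  | .prop _ => False
  | .impL φ ψ => φ.propFree ∧ ψ.propFree
  | .conj φ ψ => φ.propFree ∧ ψ.propFree

/-- RPL: the ⊙-free fragment of RPL(⊙). -/
def RPLForm.noConj : RPLForm → Prop
  | .const _ => True
  | .prop _ => True
  | .impL φ ψ => φ.noConj ∧ ψ.noConj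
  | .conj _ _ => False

/-- Łukasiewicz logic: the only truth constant is 0̄ and there is no ⊙. -/
def RPLForm.isLuk : RPLForm → Prop
  | .const r => r.1 = 0
  | .prop _ => True
  | .impL φ ψ => φ.isLuk ∧ ψ.isLuk
  | .conj _ _ => False

/-- The fragment RPL(⊙)_{≤ n}. -/
inductive RPLForm.InFrag : ℕ → RPLForm → Prop where
  | propfree {n φ} : RPLForm.propFree φ → RPLForm.InFrag n φ
  | prop {n} (p : ℕ) : RPLForm.InFrag (n + 1) (.prop p)
  | up {n φ} : RPLForm.InFrag n φ → RPLForm.InFrag (n + 1) φ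
  | conj {n i j α β} : RPLForm.InFrag i α → RPLForm.InFrag j β → i + j ≤ n + 1 →
      RPLForm.InFrag (n + 1) (.conj α β)
  | impL {n φ ψ} : RPLForm.InFrag (n + 1) φ → RPLForm.InFrag (n + 1) ψ →
      RPLForm.InFrag (n + 1) (.impL φ ψ)

/-- Formulae of LΠ½. -/
inductive LPiForm : Type where
  | zero : LPiForm
  | half : LPiForm
  | prop : ℕ → LPiForm
  | impL : LPiForm → LPiForm → LPiForm
  | conj : LPiForm → LPiForm → LPiForm
  | impP : LPiForm → LPiForm → LPiForm

/-- Truth value of an LΠ½-formula under a valuation. -/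
noncomputable def LPiForm.val (V : ℕ → ℝ) : LPiForm → ℝ
  | .zero => 0
  | .half => 1 / 2
  | .prop p => V p
  | .impL φ ψ => min 1 (1 - φ.val V + ψ.val V)
  | .conj φ ψ => φ.val V * ψ.val V
  | .impP φ ψ => if φ.val V ≤ ψ.val V then 1 else ψ.val V / φ.val V

/-- LΠ½-formulae with no proposition symbols (LΠ½_{≤0}). -/
def LPiForm.propFree : LPiForm → Prop
  | .zero => True
  | .half => True
  | .prop _ => False
  | .impL φ ψ => φ.propFree ∧ ψ.propFree
  | .conj φ ψ => φ.propFree ∧ ψ.propFree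
  | .impP φ ψ => φ.propFree ∧ ψ.propFree

/-- LΠ½(→_P⁻): no proposition symbols in the scope of →_P. -/
inductive LPiForm.InPF : LPiForm → Prop where
  | base {φ} : LPiForm.propFree φ → LPiForm.InPF φ
  | prop (p : ℕ) : LPiForm.InPF (.prop p)
  | impL {φ ψ} : LPiForm.InPF φ → LPiForm.InPF ψ → LPiForm.InPF (.impL φ ψ)
  | conj {φ ψ} : LPiForm.InPF φ → LPiForm.InPF ψ → LPiForm.InPF (.conj φ ψ)

/-- LΠ½(⊙⁻, →_P⁻): no proposition symbols in the scope of ⊙ or →_P. -/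
inductive LPiForm.InPFF : LPiForm → Prop where
  | base {φ} : LPiForm.propFree φ → LPiForm.InPFF φ
  | prop (p : ℕ) : LPiForm.InPFF (.prop p)
  | impL {φ ψ} : LPiForm.InPFF φ → LPiForm.InPFF ψ → LPiForm.InPFF (.impL φ ψ)

/-- The fragment LΠ½(→_P⁻)_{≤ n}. -/
inductive LPiForm.InFragPF : ℕ → LPiForm → Prop where
  | propfree {n φ} : LPiForm.propFree φ → LPiForm.InFragPF n φ
  | prop {n} (p : ℕ) : LPiForm.InFragPF (n + 1) (.prop p)
  | up {n φ} : LPiForm.InFragPF n φ → LPiForm.InFragPF (n + 1) φ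
  | conj {n i j α β} : LPiForm.InFragPF i α → LPiForm.InFragPF j β → i + j ≤ n + 1 →
      LPiForm.InFragPF (n + 1) (.conj α β)
  | impL {n φ ψ} : LPiForm.InFragPF (n + 1) φ → LPiForm.InFragPF (n + 1) ψ →
      LPiForm.InFragPF (n + 1) (.impL φ ψ)

/-- scale_k(x) = (k + x)/(2k). -/
noncomputable def scaleK (k x : ℝ) : ℝ := (k + x) / (2 * k)

/-- Equivalence of a term and an RPL(⊙)-formula (the bijection p ↦ x_p is
the identity on ℕ). -/
def TermFormEquiv (t : RTerm) (φ : RPLForm) : Prop :=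
  ∀ (E V : ℕ → ℝ), IsValuation V → (∀ x, E x = V x) → t.eval E = φ.val V

/-- (i,k)-equivalence of a formula to a term. -/
def IKEquiv (i k : ℝ) (φ : RPLForm) (t : RTerm) : Prop :=
  ∀ E : ℕ → ℝ, (∀ x, -i ≤ E x ∧ E x ≤ i) →
    φ.val (fun p => scaleK k (E p)) = scaleK k (t.eval E)

/-- k-equivalence of formulae. -/
def KEquiv (k : ℝ) (ψ φ : RPLForm) : Prop :=
  ∀ V V' : ℕ → ℝ, IsValuation V → IsValuation V' → (∀ p, V' p = scaleK k (V p)) →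
    ψ.val V' = scaleK k (φ.val V)

/-- Equivalence of terms. -/
def TermEquiv (t t' : RTerm) : Prop := ∀ E : ℕ → ℝ, t.eval E = t'.eval E

/-- [0,1]-equivalence of terms. -/
def TermEquiv01 (t t' : RTerm) : Prop :=
  ∀ E : ℕ → ℝ, (∀ x, 0 ≤ E x ∧ E x ≤ 1) → t.eval E = t'.eval E

/-- Equivalence of an RPL(⊙)-formula and an LΠ½-formula. -/
def RLEquiv (φ : RPLForm) (ψ : LPiForm) : Prop :=
  ∀ V : ℕ → ℝ, IsValuation V → φ.val V = ψ.val V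

/-- The truth constant 0̄. -/
def RPLForm.zeroC : RPLForm := .const ⟨0, by norm_num⟩

/-- ¬_L φ := φ →_L 0̄. -/
def RPLForm.negL (φ : RPLForm) : RPLForm := φ.impL RPLForm.zeroC

/-- φ ⊕ ψ := ¬_L φ →_L ψ. -/
def RPLForm.oplus (φ ψ : RPLForm) : RPLForm := φ.negL.impL ψ

/-- φ ⊗ ψ := ¬_L (φ →_L ¬_L ψ). -/
def RPLForm.otimes (φ ψ : RPLForm) : RPLForm := (φ.impL ψ.negL).negL

/-- φ ⊖ ψ := φ ⊗ ¬_L ψ  (semantics: max{0, V(φ) − V(ψ)}). -/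
def RPLForm.ominus (φ ψ : RPLForm) : RPLForm := φ.otimes ψ.negL

/-- φ ⊕' ψ := (φ ⊖ ¼̄) ⊕ (ψ ⊖ ¼̄). -/
def RPLForm.oplus' (φ ψ : RPLForm) : RPLForm :=
  (φ.ominus (.const ⟨1/4, by norm_num⟩)).oplus (ψ.ominus (.const ⟨1/4, by norm_num⟩))

/-- The iterated sum ⨀_n. -/
def RPLForm.bigOplus : ℕ → RPLForm → RPLForm
  | 0, _ => RPLForm.zeroC
  | n + 1, φ => (RPLForm.bigOplus n φ).oplus φ

/-- The iterated operator ⨀'_n; `Nat.clog 2 n` is the least j with n ≤ 2^j. -/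
def RPLForm.bigOplus' : ℕ → RPLForm → RPLForm
  | 0, _ => .const ⟨1/2, by norm_num⟩
  | 1, φ => φ
  | n + 2, φ =>
      RPLForm.oplus' (RPLForm.bigOplus' (2 ^ (Nat.clog 2 (n + 2) - 1)) φ)
        (RPLForm.bigOplus' ((n + 2) - 2 ^ (Nat.clog 2 (n + 2) - 1)) φ)
  termination_by n _ => n
  decreasing_by
  · have h := Nat.pow_pred_clog_lt_self (b := 2) (x := n + 2) (by norm_num) (by omega)
    rw [Nat.pred_eq_sub_one] at h
    first | exact h | omega | simpa using h
  · have h1 : 0 < 2 ^ (Nat.clog 2 (n + 2) - 1) := by positivity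
    omega

theorem inv2k_mem (k : ℕ) (hk : 1 ≤ k) : 0 ≤ (1 / (2 * (k : ℚ))) ∧ (1 / (2 * (k : ℚ))) ≤ 1 := by
  have h : (1 : ℚ) ≤ (k : ℚ) := by exact_mod_cast hk
  constructor
  · positivity
  · rw [div_le_one (by linarith)]
    linarith

/-- φ ⊙^k ψ := ⨀_k((⨀_2(φ ⊙ ψ) ⊕ (1/(2k))̄) ⊖ (φ ⊕' ψ)). -/
def RPLForm.odotPow (k : ℕ) (hk : 1 ≤ k) (φ ψ : RPLForm) : RPLForm :=
  RPLForm.bigOplus k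
    (((RPLForm.bigOplus 2 (φ.conj ψ)).oplus
        (.const ⟨1 / (2 * (k : ℚ)), inv2k_mem k hk⟩)).ominus (φ.oplus' ψ))

section Aux

/-! ### Basic facts about valuations of RPL(⊙)-formulae -/

lemma val_mem' {V : ℕ → ℝ} (hV : IsValuation V) (φ : RPLForm) :
    0 ≤ φ.val V ∧ φ.val V ≤ 1 := by
  induction φ with
  | const r =>
      simp only [RPLForm.val]
      exact ⟨by exact_mod_cast r.2.1, by exact_mod_cast r.2.2⟩
  | prop p => exact hV p
  | impL φ ψ ihφ ihψ =>
      simp only [RPLForm.val]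
      exact ⟨le_min (by norm_num) (by linarith [ihφ.2, ihψ.1]), min_le_left _ _⟩
  | conj φ ψ ihφ ihψ =>
      simp only [RPLForm.val]
      exact ⟨mul_nonneg ihφ.1 ihψ.1, mul_le_one₀ ihφ.2 ihψ.1 ihψ.2⟩

lemma val_negL' {V : ℕ → ℝ} (hV : IsValuation V) (φ : RPLForm) :
    (φ.negL).val V = 1 - φ.val V := by
  obtain ⟨h0, h1⟩ := val_mem' hV φ
  simp only [RPLForm.negL, RPLForm.zeroC, RPLForm.val, Rat.cast_zero, add_zero]
  exact min_eq_right (by linarith)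

lemma val_oplusE {V : ℕ → ℝ} (hV : IsValuation V) (φ ψ : RPLForm) :
    (φ.oplus ψ).val V = min 1 (φ.val V + ψ.val V) := by
  obtain ⟨h0, h1⟩ := val_mem' hV φ
  obtain ⟨g0, g1⟩ := val_mem' hV ψ
  simp only [RPLForm.oplus, RPLForm.negL, RPLForm.zeroC, RPLForm.val,
    Rat.cast_zero, add_zero]
  simp only [min_def]
  split_ifs <;> linarith

lemma val_otimesE {V : ℕ → ℝ} (hV : IsValuation V) (φ ψ : RPLForm) :
    (φ.otimes ψ).val V = max 0 (φ.val V + ψ.val V - 1) := by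
  obtain ⟨ha0, ha1⟩ := val_mem' hV φ
  obtain ⟨hb0, hb1⟩ := val_mem' hV ψ
  simp only [RPLForm.otimes, RPLForm.negL, RPLForm.zeroC, RPLForm.val,
    Rat.cast_zero, add_zero]
  simp only [min_def, max_def]
  split_ifs <;> linarith

lemma val_ominusE {V : ℕ → ℝ} (hV : IsValuation V) (φ ψ : RPLForm) :
    (φ.ominus ψ).val V = max 0 (φ.val V - ψ.val V) := by
  rw [RPLForm.ominus, val_otimesE hV, val_negL' hV]
  congr 1; ring

lemma val_oplus'E {V : ℕ → ℝ} (hV : IsValuation V) (φ ψ : RPLForm) :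
    (φ.oplus' ψ).val V
      = min 1 (max 0 (φ.val V - 1/4) + max 0 (ψ.val V - 1/4)) := by
  rw [RPLForm.oplus', val_oplusE hV, val_ominusE hV, val_ominusE hV]
  norm_num [RPLForm.val]

lemma val_bigOplusE {V : ℕ → ℝ} (hV : IsValuation V) (n : ℕ) (φ : RPLForm) :
    (RPLForm.bigOplus n φ).val V = min 1 (n * φ.val V) := by
  obtain ⟨h0, h1⟩ := val_mem' hV φ
  induction n with
  | zero => simp [RPLForm.bigOplus, RPLForm.zeroC, RPLForm.val]
  | succ n ih =>
      show ((RPLForm.bigOplus n φ).oplus φ).val V = _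
      rw [val_oplusE hV, ih]
      rcases le_total ((n : ℝ) * φ.val V) 1 with h | h
      · rw [min_eq_right h]
        congr 1; push_cast; ring
      · rw [min_eq_left h, min_eq_left (by linarith),
          min_eq_left (by push_cast; nlinarith)]

/-! ### Bounds on term values -/

noncomputable def bnd (c : ℝ) : RTerm → ℝ
  | .const r => max |(r : ℝ)| 1
  | .var _ => max c 1
  | .add t t' => bnd c t + bnd c t'
  | .mul t t' => bnd c t * bnd c t'
  | .relu t => bnd c t

lemma one_le_bnd (c : ℝ) (t : RTerm) : 1 ≤ bnd c t := by
  induction t with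
  | const r => exact le_max_right _ _
  | var x => exact le_max_right _ _
  | add t t' ih ih' => simp only [bnd]; linarith
  | mul t t' ih ih' => simp only [bnd]; nlinarith
  | relu t ih => exact ih

lemma abs_eval_le {c : ℝ} {E : ℕ → ℝ} (hE : ∀ x, |E x| ≤ c) (t : RTerm) :
    |t.eval E| ≤ bnd c t := by
  induction t with
  | const r => exact le_max_left _ _
  | var x => exact le_trans (hE x) (le_max_left _ _)
  | add t t' ih ih' =>
      simp only [RTerm.eval, bnd]
      exact le_trans (abs_add_le _ _) (by linarith)
  | mul t t' ih ih' =>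
      simp only [RTerm.eval, bnd]
      rw [abs_mul]
      exact mul_le_mul ih ih' (abs_nonneg _) (le_trans (abs_nonneg _) ih)
  | relu t ih =>
      simp only [RTerm.eval, bnd]
      have h := abs_le.mp ih
      rw [abs_le]
      refine ⟨?_, max_le (le_trans zero_le_one (one_le_bnd c t)) h.2⟩
      calc -(bnd c t) ≤ 0 := by linarith [one_le_bnd c t]
        _ ≤ max 0 (t.eval E) := le_max_left _ _

/-! ### The translation from terms to formulae -/

def clampQ (q : ℚ) : {r : ℚ // 0 ≤ r ∧ r ≤ 1} :=
  ⟨max 0 (min 1 q), le_max_left _ _, max_le (by norm_num) (min_le_left _ _)⟩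

def toForm (K : ℕ) (hK : 1 ≤ K) : RTerm → RPLForm
  | .const r => .const (clampQ (((K : ℚ) + r) / (2 * K)))
  | .var x => .prop x
  | .add t t' => (toForm K hK t).oplus' (toForm K hK t')
  | .mul t t' => RPLForm.odotPow K hK (toForm K hK t) (toForm K hK t')
  | .relu t => (RPLForm.const ⟨1/2, by norm_num⟩).oplus
      ((toForm K hK t).ominus (.const ⟨1/2, by norm_num⟩))

lemma scaleK_bd {k a : ℝ} (hk : 0 < k) (ha : |a| ≤ k / 4) :
    3/8 ≤ scaleK k a ∧ scaleK k a ≤ 5/8 := by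
  rw [abs_le] at ha
  unfold scaleK
  constructor
  · rw [le_div_iff₀ (by linarith)]; linarith
  · rw [div_le_iff₀ (by linarith)]; linarith

lemma scaleK_mem {k a : ℝ} (hk : 0 < k) (h1 : -k ≤ a) (h2 : a ≤ k) :
    0 ≤ scaleK k a ∧ scaleK k a ≤ 1 := by
  unfold scaleK
  exact ⟨div_nonneg (by linarith) (by linarith),
    (div_le_one (by linarith)).mpr (by linarith)⟩

set_option maxHeartbeats 1000000 in
lemma toForm_correct (K : ℕ) (hK : 1 ≤ K) (i : ℝ) (hi : 0 < i) (hiK : i ≤ K)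
    (E : ℕ → ℝ) (hE : ∀ x, -i ≤ E x ∧ E x ≤ i) :
    ∀ t : RTerm, 4 * bnd i t ≤ K →
      (toForm K hK t).val (fun p => scaleK K (E p)) = scaleK K (t.eval E) := by
  have hk : (0:ℝ) < K := lt_of_lt_of_le hi hiK
  have hEabs : ∀ x, |E x| ≤ i := fun x => abs_le.mpr (hE x)
  have hV : IsValuation (fun p => scaleK K (E p)) :=
    fun p => scaleK_mem hk (by linarith [(hE p).1]) (by linarith [(hE p).2])
  intro t
  induction t with
  | const r =>
      intro hb
      simp only [bnd] at hb
      have hr : |(r:ℝ)| ≤ (K:ℝ) := by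
        have := le_max_left |(r:ℝ)| 1; linarith
      have hrq : |r| ≤ (K:ℚ) := by
        rw [← Rat.cast_le (K := ℝ)]; push_cast; exact hr
      have hKq : (0:ℚ) < K := by exact_mod_cast hK
      rw [abs_le] at hrq
      have h0 : (0:ℚ) ≤ ((K:ℚ) + r) / (2 * K) := div_nonneg (by linarith) (by linarith)
      have h1 : ((K:ℚ) + r) / (2 * K) ≤ 1 := by
        rw [div_le_one (by linarith)]; linarith
      simp only [toForm, RPLForm.val, clampQ, RTerm.eval]
      rw [min_eq_right h1, max_eq_right h0]
      unfold scaleK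
      push_cast
      ring
  | var x =>
      intro _
      simp only [toForm, RPLForm.val, RTerm.eval]
  | add t1 t2 ih1 ih2 =>
      intro hb
      simp only [bnd] at hb
      have b1 := one_le_bnd i t1
      have b2 := one_le_bnd i t2
      have e1 := ih1 (by linarith)
      have e2 := ih2 (by linarith)
      have ha : |t1.eval E| ≤ (K:ℝ)/4 := le_trans (abs_eval_le hEabs t1) (by linarith)
      have hb' : |t2.eval E| ≤ (K:ℝ)/4 := le_trans (abs_eval_le hEabs t2) (by linarith)
      obtain ⟨hu1, hu2⟩ := scaleK_bd hk ha
      obtain ⟨hv1, hv2⟩ := scaleK_bd hk hb'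
      simp only [toForm, RTerm.eval]
      rw [val_oplus'E hV, e1, e2,
        max_eq_right (by linarith), max_eq_right (by linarith),
        min_eq_right (by linarith)]
      unfold scaleK
      field_simp
      ring
  | relu t1 ih =>
      intro hb
      simp only [bnd] at hb
      have e1 := ih hb
      have ha : |t1.eval E| ≤ (K:ℝ)/4 :=
        le_trans (abs_eval_le hEabs t1) (by linarith [one_le_bnd i t1])
      obtain ⟨hu1, hu2⟩ := scaleK_bd hk ha
      simp only [toForm, RTerm.eval]
      rw [val_oplusE hV, val_ominusE hV, e1]
      have hcv : ((RPLForm.const ⟨1/2, by norm_num⟩ : RPLForm)).val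
          (fun p => scaleK K (E p)) = 1/2 := by
        simp only [RPLForm.val]; norm_num
      rw [hcv]
      rcases le_total (t1.eval E) 0 with h | h
      · have hle : scaleK (K:ℝ) (t1.eval E) ≤ 1/2 := by
          unfold scaleK; rw [div_le_iff₀ (by linarith)]; linarith
        rw [max_eq_left h, max_eq_left (by linarith), min_eq_right (by norm_num)]
        unfold scaleK
        rw [add_zero, add_zero]
        field_simp
      · have hge : 1/2 ≤ scaleK (K:ℝ) (t1.eval E) := by
          unfold scaleK; rw [le_div_iff₀ (by linarith)]; linarith
        rw [max_eq_right h, max_eq_right (by linarith), min_eq_right (by linarith)]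
        ring
  | mul t1 t2 ih1 ih2 =>
      intro hb
      simp only [bnd] at hb
      have b1 := one_le_bnd i t1
      have b2 := one_le_bnd i t2
      have e1 := ih1 (by nlinarith)
      have e2 := ih2 (by nlinarith)
      have hk4 : (4:ℝ) ≤ K := by nlinarith
      have ha : |t1.eval E| ≤ (K:ℝ)/4 := le_trans (abs_eval_le hEabs t1) (by nlinarith)
      have hbb : |t2.eval E| ≤ (K:ℝ)/4 := le_trans (abs_eval_le hEabs t2) (by nlinarith)
      have hab : |t1.eval E * t2.eval E| ≤ (K:ℝ)/4 := by
        rw [abs_mul]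
        calc |t1.eval E| * |t2.eval E| ≤ bnd i t1 * bnd i t2 :=
              mul_le_mul (abs_eval_le hEabs t1) (abs_eval_le hEabs t2) (abs_nonneg _)
                (le_trans (abs_nonneg _) (abs_eval_le hEabs t1))
          _ ≤ (K:ℝ)/4 := by linarith
      obtain ⟨hab1, hab2⟩ := abs_le.mp hab
      obtain ⟨hu1, hu2⟩ := scaleK_bd hk ha
      obtain ⟨hv1, hv2⟩ := scaleK_bd hk hbb
      have h2k : 1/(2*(K:ℝ)) ≤ 1/8 := by
        rw [div_le_div_iff₀ (by linarith) (by norm_num)]; linarith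
      have h2k0 : (0:ℝ) < 1/(2*(K:ℝ)) := by positivity
      simp only [toForm, RTerm.eval, RPLForm.odotPow]
      have hconj : ((toForm K hK t1).conj (toForm K hK t2)).val
          (fun p => scaleK K (E p)) = scaleK (K:ℝ) (t1.eval E) * scaleK (K:ℝ) (t2.eval E) := by
        simp only [RPLForm.val]; rw [e1, e2]
      have h2uv : (RPLForm.bigOplus 2 ((toForm K hK t1).conj (toForm K hK t2))).val
          (fun p => scaleK K (E p))
          = 2 * (scaleK (K:ℝ) (t1.eval E) * scaleK (K:ℝ) (t2.eval E)) := by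
        rw [val_bigOplusE hV, hconj]
        rw [min_eq_right (by push_cast; nlinarith)]
        push_cast; ring
      have hc : ((RPLForm.const ⟨1 / (2 * (K : ℚ)), inv2k_mem K hK⟩ : RPLForm)).val
          (fun p => scaleK K (E p)) = 1 / (2 * (K:ℝ)) := by
        simp only [RPLForm.val]; push_cast; ring
      have hY : ((RPLForm.bigOplus 2 ((toForm K hK t1).conj (toForm K hK t2))).oplus
            (RPLForm.const ⟨1 / (2 * (K : ℚ)), inv2k_mem K hK⟩)).val (fun p => scaleK K (E p))
          = 2 * (scaleK (K:ℝ) (t1.eval E) * scaleK (K:ℝ) (t2.eval E)) + 1 / (2 * (K:ℝ)) := by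
        rw [val_oplusE hV, h2uv, hc, min_eq_right (by nlinarith)]
      have hop : ((toForm K hK t1).oplus' (toForm K hK t2)).val (fun p => scaleK K (E p))
          = scaleK (K:ℝ) (t1.eval E) + scaleK (K:ℝ) (t2.eval E) - 1/2 := by
        rw [val_oplus'E hV, e1, e2, max_eq_right (by linarith), max_eq_right (by linarith),
          min_eq_right (by linarith)]
        ring
      have key : 2 * (scaleK (K:ℝ) (t1.eval E) * scaleK (K:ℝ) (t2.eval E)) + 1 / (2 * (K:ℝ))
          - (scaleK (K:ℝ) (t1.eval E) + scaleK (K:ℝ) (t2.eval E) - 1/2)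
          = (t1.eval E * t2.eval E + K) / (2 * (K:ℝ)^2) := by
        have gen : ∀ a b k : ℝ, k ≠ 0 →
            2 * ((k+a)/(2*k) * ((k+b)/(2*k))) + 1/(2*k) - ((k+a)/(2*k) + (k+b)/(2*k) - 1/2)
              = (a*b+k)/(2*k^2) := by
          intro a b k hk0; field_simp; ring
        unfold scaleK; exact gen _ _ _ (ne_of_gt hk)
      have hinner : ((((RPLForm.bigOplus 2 ((toForm K hK t1).conj (toForm K hK t2))).oplus
            (RPLForm.const ⟨1 / (2 * (K : ℚ)), inv2k_mem K hK⟩)).ominus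
            ((toForm K hK t1).oplus' (toForm K hK t2))).val (fun p => scaleK K (E p)))
          = (t1.eval E * t2.eval E + K) / (2 * (K:ℝ)^2) := by
        rw [val_ominusE hV, hY, hop, key]
        exact max_eq_right (div_nonneg (by linarith) (by positivity))
      rw [val_bigOplusE hV, hinner]
      have hfin : (K:ℝ) * ((t1.eval E * t2.eval E + K) / (2 * (K:ℝ)^2))
          = (t1.eval E * t2.eval E + K) / (2 * (K:ℝ)) := by
        have gen : ∀ c k : ℝ, k ≠ 0 → k * ((c+k)/(2*k^2)) = (c+k)/(2*k) := by
          intro c k hk0; field_simp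
        exact gen _ _ (ne_of_gt hk)
      rw [hfin, min_eq_right (by rw [div_le_one (by linarith)]; linarith)]
      unfold scaleK
      ring

/-! ### The translation from formulae to terms -/

def ofForm : RPLForm → RTerm
  | .const r => .const r.1
  | .prop p => .var p
  | .impL φ ψ => .add (.const 1)
      (.mul (.const (-1)) (.relu (.add (ofForm φ) (.mul (.const (-1)) (ofForm ψ)))))
  | .conj φ ψ => .mul (ofForm φ) (ofForm ψ)

lemma ofForm_equiv (φ : RPLForm) : TermFormEquiv (ofForm φ) φ := by
  intro E V hV hEV
  induction φ with
  | const r => simp [ofForm, RTerm.eval, RPLForm.val]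
  | prop p => simp [ofForm, RTerm.eval, RPLForm.val, hEV p]
  | impL φ ψ ihφ ihψ =>
      simp only [ofForm, RTerm.eval, RPLForm.val, ihφ, ihψ]
      push_cast
      rcases le_total (φ.val V) (ψ.val V) with h | h
      · rw [max_eq_left (by linarith), min_eq_left (by linarith)]; ring
      · rw [max_eq_right (by linarith), min_eq_right (by linarith)]; ring
  | conj φ ψ ihφ ihψ => simp [ofForm, RTerm.eval, RPLForm.val, ihφ, ihψ]

end Aux

/-- ℚ[ReLU, x_i] and RPL(⊙) have the same expressive power w.r.t. scaling. -/
theorem coolname_eq_RPLodot :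
    (∀ (n : ℕ), 1 ≤ n → ∀ t : Fin n → RTerm, ∀ i : ℝ, 0 < i →
      ∃ k : ℝ, i ≤ k ∧ ∃ φ : Fin n → RPLForm, ∀ j, IKEquiv i k (φ j) (t j)) ∧
    (∀ (n : ℕ), 1 ≤ n → ∀ φ : Fin n → RPLForm,
      ∃ t : Fin n → RTerm, ∀ j, TermFormEquiv (t j) (φ j)) := by
  constructor
  · intro n hn t i hi
    obtain ⟨K, hKS⟩ := exists_nat_ge (i + ∑ j : Fin n, 4 * bnd i (t j))
    have hpos : ∀ j : Fin n, 0 < 4 * bnd i (t j) := fun j => by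
      linarith [one_le_bnd i (t j)]
    have hsum : ∀ j : Fin n, 4 * bnd i (t j) ≤ ∑ j : Fin n, 4 * bnd i (t j) :=
      fun j => Finset.single_le_sum (fun j _ => le_of_lt (hpos j)) (Finset.mem_univ j)
    have hsum0 : 0 ≤ ∑ j : Fin n, 4 * bnd i (t j) :=
      Finset.sum_nonneg fun j _ => le_of_lt (hpos j)
    have hiK : i ≤ (K:ℝ) := by linarith
    have hb : ∀ j, 4 * bnd i (t j) ≤ (K:ℝ) := fun j => by linarith [hsum j]
    have hK1 : 1 ≤ K := by
      have j0 : Fin n := ⟨0, hn⟩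
      have h4 : (4:ℝ) ≤ K := le_trans (by linarith [one_le_bnd i (t j0)]) (hb j0)
      exact_mod_cast le_trans (by norm_num : (1:ℝ) ≤ 4) h4
    refine ⟨K, hiK, fun j => toForm K hK1 (t j), fun j => ?_⟩
    intro E hEr
    exact toForm_correct K hK1 i hi hiK E hEr (t j) (hb j)
  · intro n hn φ
    exact ⟨fun j => ofForm (φ j), fun j => ofForm_equiv (φ j)⟩
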